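/- arXiv:2512.12862 — 5 statements merged into one kernel-verified Lean document; each statement's English description precedes it below -/
import Mathlib

section
/- Let X be a nonempty compact metric space with metric d and let T : X → X be an arbitrary function (no continuity or measurability is assumed). Then (i) there exists a strongly chain-recurrent point, i.e., some x ∈ X with x SC_d x, and (ii) there exists a nonempty, topologically closed subset S ⊆ X with T(S) ⊆ S that is internally SC_d-transitive. (This is the topological content of the paper's Theorem on the induced collapse dynamics T_{U,D} on projective state space ℙ(ℋ), which is a nonempty compact metric space under the Fubini–Study metric, since no regularity of T_{U,D} is assumed.) -/
/-- `c 0, c 1, …, c n` is a strong `(ε,d)`-chain for `f` from `x` to `y`: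
`n ≥ 1`, `c 0 = x`, `c n = y` and `∑_{i<n} d(f(c i), c (i+1)) < ε`. -/
def IsStrongChain {X : Type*} [MetricSpace X] (f : X → X) (ε : ℝ) (x y : X)
    (n : ℕ) (c : ℕ → X) : Prop :=
  1 ≤ n ∧ c 0 = x ∧ c n = y ∧
    ∑ i ∈ Finset.range n, dist (f (c i)) (c (i + 1)) < ε

/-- The strong chain relation `SC_d`. -/
def StrongChainRel {X : Type*} [MetricSpace X] (f : X → X) (x y : X) : Prop :=
  ∀ ε : ℝ, 0 < ε → ∃ (n : ℕ) (c : ℕ → X), IsStrongChain f ε x y n c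

/-!
By Zorn's lemma and Cantor's intersection theorem there is a minimal nonempty closed
`T`-invariant set `S`. For `x ∈ S`, the set of points reachable from `x` by arbitrarily cheap
strong chains inside `S` contains `T x`, is invariant (append the free step `y ↦ T y`) and is
closed (redirect the last step of a chain to a nearby point, paying that distance), so by
minimality it is all of `S`. No continuity of `T` is needed: a strong chain only evaluates `T`
at its own points.
-/

open Set Function

section Chains

variable {X : Type*} [MetricSpace X] {T : X → X} {ε δ : ℝ} {x y z : X} {n : ℕ} {c : ℕ → X}

lemma IsStrongChain.mono (hc : IsStrongChain T δ x y n c) (h : δ ≤ ε) :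
    IsStrongChain T ε x y n c :=
  ⟨hc.1, hc.2.1, hc.2.2.1, hc.2.2.2.trans_le h⟩

lemma isStrongChain_apply (T : X → X) (x : X) (hε : 0 < ε) :
    IsStrongChain T ε x (T x) 1 (update (fun _ ↦ T x) 0 x) :=
  ⟨le_rfl, by simp, by simp, by simpa using hε⟩

lemma IsStrongChain.snoc_apply (hc : IsStrongChain T ε x y n c) :
    IsStrongChain T ε x (T y) (n + 1) (update c (n + 1) (T y)) := by
  obtain ⟨hn, h0, hy, hsum⟩ := hc
  refine ⟨by omega, by simpa using h0, by simp, ?_⟩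
  have hinit : ∀ i ∈ Finset.range n, dist (T (update c (n + 1) (T y) i))
      (update c (n + 1) (T y) (i + 1)) = dist (T (c i)) (c (i + 1)) := by
    intro i hi
    rw [Finset.mem_range] at hi
    rw [update_of_ne (by omega), update_of_ne (by omega)]
  rw [Finset.sum_range_succ, Finset.sum_congr rfl hinit, update_of_ne (by omega),
    update_self, hy, dist_self, add_zero]
  exact hsum

lemma IsStrongChain.update_last (hc : IsStrongChain T δ x z n c) (y : X) :
    IsStrongChain T (δ + dist z y) x y n (update c n y) := by
  obtain ⟨hn, h0, hz, hsum⟩ := hc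
  obtain ⟨m, rfl⟩ : ∃ m, n = m + 1 := ⟨n - 1, by omega⟩
  refine ⟨hn, by simpa using h0, by simp, ?_⟩
  have hinit : ∀ i ∈ Finset.range m, dist (T (update c (m + 1) y i))
      (update c (m + 1) y (i + 1)) = dist (T (c i)) (c (i + 1)) := by
    intro i hi
    rw [Finset.mem_range] at hi
    rw [update_of_ne (by omega), update_of_ne (by omega)]
  have hlast : dist (T (c m)) y ≤ dist (T (c m)) (c (m + 1)) + dist z y :=
    hz ▸ dist_triangle _ _ _
  rw [Finset.sum_range_succ] at hsum ⊢
  rw [Finset.sum_congr rfl hinit, update_of_ne (by omega), update_self]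
  linarith

end Chains

theorem exists_minimal_nonempty_isClosed_mapsTo {X : Type*} [TopologicalSpace X]
    [CompactSpace X] [Nonempty X] (T : X → X) :
    ∃ S : Set X, Minimal (fun S ↦ S.Nonempty ∧ IsClosed S ∧ MapsTo T S S) S := by
  obtain ⟨S, -, hS⟩ := zorn_superset_nonempty {S : Set X | S.Nonempty ∧ IsClosed S ∧ MapsTo T S S}
    (fun 𝒞 h𝒞 hchain hne ↦ by
      have : Nonempty 𝒞 := hne.to_subtype
      refine ⟨⋂₀ 𝒞, ⟨?_, isClosed_sInter fun S hS ↦ (h𝒞 hS).2.1,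
        fun x hx S hS ↦ (h𝒞 hS).2.2 (hx S hS)⟩, fun S ↦ sInter_subset_of_mem⟩
      exact IsCompact.nonempty_sInter_of_directed_nonempty_isCompact_isClosed
        (IsChain.directedOn (r := fun s t : Set X ↦ s ⊇ t) hchain.symm) (fun S hS ↦ (h𝒞 hS).1)
        (fun S hS ↦ (h𝒞 hS).2.1.isCompact) (fun S hS ↦ (h𝒞 hS).2.1))
    univ ⟨univ_nonempty, isClosed_univ, mapsTo_univ T univ⟩
  exact ⟨S, hS⟩

section Within

variable {X : Type*} [MetricSpace X] {T : X → X} {S : Set X} {x y : X}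

def StrongChainRelWithin (T : X → X) (S : Set X) (x y : X) : Prop :=
  ∀ ε : ℝ, 0 < ε → ∃ (n : ℕ) (c : ℕ → X), IsStrongChain T ε x y n c ∧ ∀ i ≤ n, c i ∈ S

lemma StrongChainRelWithin.strongChainRel (h : StrongChainRelWithin T S x y) :
    StrongChainRel T x y := fun ε hε ↦
  let ⟨n, c, hc, _⟩ := h ε hε
  ⟨n, c, hc⟩

lemma StrongChainRelWithin.mem (h : StrongChainRelWithin T S x y) : y ∈ S := by
  obtain ⟨n, c, hc, hcS⟩ := h 1 one_pos
  exact hc.2.2.1 ▸ hcS n le_rfl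

lemma strongChainRelWithin_apply (hS : MapsTo T S S) (hx : x ∈ S) :
    StrongChainRelWithin T S x (T x) := fun _ hε ↦ by
  refine ⟨1, _, isStrongChain_apply T x hε, fun i _ ↦ ?_⟩
  rcases eq_or_ne i 0 with rfl | hi
  · simpa using hx
  · simpa [update_of_ne hi] using hS hx

lemma StrongChainRelWithin.apply (h : StrongChainRelWithin T S x y) (hS : MapsTo T S S) :
    StrongChainRelWithin T S x (T y) := fun ε hε ↦ by
  obtain ⟨n, c, hc, hcS⟩ := h ε hε
  refine ⟨n + 1, _, hc.snoc_apply, fun i hi ↦ ?_⟩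
  rcases eq_or_ne i (n + 1) with rfl | hi'
  · simpa using hS h.mem
  · simpa [update_of_ne hi'] using hcS i (by omega)

lemma isClosed_setOf_strongChainRelWithin (T : X → X) (hS : IsClosed S) (x : X) :
    IsClosed {y | StrongChainRelWithin T S x y} := by
  refine isClosed_of_closure_subset fun y hy ε hε ↦ ?_
  have hyS : y ∈ S := closure_minimal (fun _ ↦ StrongChainRelWithin.mem) hS hy
  obtain ⟨z, hz, hzy⟩ := Metric.mem_closure_iff.mp hy (ε / 2) (half_pos hε)
  obtain ⟨n, c, hc, hcS⟩ := hz (ε / 2) (half_pos hε)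
  refine ⟨n, _, (hc.update_last y).mono (by rw [dist_comm] at hzy; linarith), fun i hi ↦ ?_⟩
  rcases eq_or_ne i n with rfl | hi'
  · simpa using hyS
  · simpa [update_of_ne hi'] using hcS i hi

theorem Minimal.strongChainRelWithin
    (hS : Minimal (fun S ↦ S.Nonempty ∧ IsClosed S ∧ MapsTo T S S) S)
    (hx : x ∈ S) (hy : y ∈ S) : StrongChainRelWithin T S x y := by
  obtain ⟨-, hSc, hST⟩ := hS.prop
  have hsub : {y | StrongChainRelWithin T S x y} ⊆ S := fun _ ↦ StrongChainRelWithin.mem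
  refine hS.le_of_le ⟨⟨T x, strongChainRelWithin_apply hST hx⟩,
    isClosed_setOf_strongChainRelWithin T hSc x, fun _ h ↦ h.apply hST⟩ hsub hy

end Within

theorem strong_chain_recurrence_and_transitive_subsystem
    {X : Type*} [MetricSpace X] [CompactSpace X] [Nonempty X] (T : X → X) :
    (∃ x : X, StrongChainRel T x x) ∧
    (∃ S : Set X, S.Nonempty ∧ IsClosed S ∧ Set.MapsTo T S S ∧
      ∀ x ∈ S, ∀ y ∈ S, ∀ ε : ℝ, 0 < ε →
        ∃ (n : ℕ) (c : ℕ → X), IsStrongChain T ε x y n c ∧ ∀ i ≤ n, c i ∈ S) := by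
  obtain ⟨S, hS⟩ := exists_minimal_nonempty_isClosed_mapsTo T
  obtain ⟨⟨x, hx⟩, hSc, hST⟩ := hS.prop
  exact ⟨⟨x, (hS.strongChainRelWithin hx hx).strongChainRel⟩,
    S, ⟨x, hx⟩, hSc, hST, fun _ hx _ hy ↦ hS.strongChainRelWithin hx hy⟩
end

section
/- Let (X,d) be a metric space, f : X → X an arbitrary function, and let M ⊆ X be a nonempty set with f(M) ⊆ M that is internally SC_d-transitive. Let y be a point of the topological closure of M. Then for every x ∈ M and every ε > 0 there exists a strong (ε,d)-chain from x to y all of whose points belong to M ∪ {y}; in particular x SC_d y for every x ∈ M. -/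
namespace IsStrongChain

variable {X : Type*} [MetricSpace X] {f : X → X} {ε : ℝ} {x y z : X} {n : ℕ} {c : ℕ → X}

theorem mono_s7 {ε' : ℝ} (h : IsStrongChain f ε x y n c) (hε : ε ≤ ε') :
    IsStrongChain f ε' x y n c :=
  ⟨h.1, h.2.1, h.2.2.1, h.2.2.2.trans_le hε⟩

theorem update_last_s7 (h : IsStrongChain f ε x z n c) (y : X) :
    IsStrongChain f (ε + dist z y) x y n (Function.update c n y) := by
  obtain ⟨hn, hc0, hcn, hsum⟩ := h
  obtain ⟨k, rfl⟩ : ∃ k, n = k + 1 := ⟨n - 1, by omega⟩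
  refine ⟨hn, by simpa using hc0, by simp, ?_⟩
  have hprefix : ∀ i ∈ Finset.range k,
      dist (f (Function.update c (k + 1) y i)) (Function.update c (k + 1) y (i + 1)) =
        dist (f (c i)) (c (i + 1)) := by
    intro i hi
    have hik := Finset.mem_range.mp hi
    rw [Function.update_of_ne (by omega), Function.update_of_ne (by omega)]
  have hlast : dist (f (c k)) y ≤ dist (f (c k)) (c (k + 1)) + dist z y := by
    rw [hcn]; exact dist_triangle _ _ _
  rw [Finset.sum_range_succ] at hsum ⊢
  rw [Finset.sum_congr rfl hprefix, Function.update_of_ne (by omega), Function.update_self]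
  linarith

end IsStrongChain

theorem strong_chain_to_closure_point_general
    {X : Type*} [MetricSpace X] (f : X → X) (M : Set X)
    (htrans : ∀ x ∈ M, ∀ y ∈ M, ∀ ε : ℝ, 0 < ε →
      ∃ (n : ℕ) (c : ℕ → X), IsStrongChain f ε x y n c ∧ ∀ i ≤ n, c i ∈ M)
    (y : X) (hy : y ∈ closure M) :
    ∀ x ∈ M,
      (∀ ε : ℝ, 0 < ε → ∃ (n : ℕ) (c : ℕ → X),
        IsStrongChain f ε x y n c ∧ ∀ i ≤ n, c i ∈ M ∪ {y}) ∧
      StrongChainRel f x y := by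
  intro x hx
  have hchain : ∀ ε : ℝ, 0 < ε → ∃ (n : ℕ) (c : ℕ → X),
      IsStrongChain f ε x y n c ∧ ∀ i ≤ n, c i ∈ M ∪ {y} := by
    intro ε hε
    obtain ⟨m, hm, hmy⟩ := Metric.mem_closure_iff.mp hy (ε / 2) (half_pos hε)
    obtain ⟨n, c, hc, hcM⟩ := htrans x hx m hm (ε / 2) (half_pos hε)
    refine ⟨n, Function.update c n y,
      (hc.update_last_s7 y).mono_s7 (by rw [dist_comm] at hmy; linarith), fun i hi => ?_⟩
    rcases eq_or_ne i n with rfl | hin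
    · simp
    · rw [Function.update_of_ne hin]; exact Or.inl (hcM i hi)
  exact ⟨hchain, fun ε hε =>
    let ⟨n, c, hc, _⟩ := hchain ε hε
    ⟨n, c, hc⟩⟩

theorem strong_chain_to_closure_point
    {X : Type*} [MetricSpace X] (f : X → X) (M : Set X) (hM : M.Nonempty)
    (hinv : Set.MapsTo f M M)
    (htrans : ∀ x ∈ M, ∀ y ∈ M, ∀ ε : ℝ, 0 < ε →
      ∃ (n : ℕ) (c : ℕ → X), IsStrongChain f ε x y n c ∧ ∀ i ≤ n, c i ∈ M)
    (y : X) (hy : y ∈ closure M) :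
    ∀ x ∈ M,
      (∀ ε : ℝ, 0 < ε → ∃ (n : ℕ) (c : ℕ → X),
        IsStrongChain f ε x y n c ∧ ∀ i ≤ n, c i ∈ M ∪ {y}) ∧
      StrongChainRel f x y :=
  strong_chain_to_closure_point_general f M htrans y hy
end

section
/- Let (X,d) be a metric space, f : X → X an arbitrary function, and S ⊆ X a set with f(S) ⊆ S that is internally SC_d-transitive. Suppose x ∈ S is an isolated point of S, i.e., there exists r > 0 such that S ∩ B(x,r) = {x}, where B(x,r) is the open ball of radius r. Then x has an exact preimage inside S: there exists y ∈ S with f(y) = x. -/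
theorem IsStrongChain.dist_apply_pred_lt {X : Type*} [MetricSpace X] {f : X → X} {ε : ℝ}
    {x y : X} {n : ℕ} {c : ℕ → X} (h : IsStrongChain f ε x y n c) :
    dist (f (c (n - 1))) y < ε := by
  obtain ⟨hn, -, rfl, hsum⟩ := h
  obtain ⟨m, rfl⟩ := Nat.exists_eq_add_of_le' hn
  rw [Finset.sum_range_succ] at hsum
  have hprefix : 0 ≤ ∑ i ∈ Finset.range m, dist (f (c i)) (c (i + 1)) :=
    Finset.sum_nonneg fun _ _ => dist_nonneg
  simp only [Nat.add_sub_cancel]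
  linarith

theorem isolated_point_has_preimage_in_transitive_set
    {X : Type*} [MetricSpace X] (f : X → X) (S : Set X)
    (hinv : Set.MapsTo f S S)
    (htrans : ∀ x ∈ S, ∀ y ∈ S, ∀ ε : ℝ, 0 < ε →
      ∃ (n : ℕ) (c : ℕ → X), IsStrongChain f ε x y n c ∧ ∀ i ≤ n, c i ∈ S)
    (x : X) (hx : x ∈ S) (r : ℝ) (hr : 0 < r)
    (hiso : S ∩ Metric.ball x r = {x}) :
    ∃ y ∈ S, f y = x := by
  obtain ⟨n, c, hchain, hmem⟩ := htrans x hx x hx r hr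
  have hy : c (n - 1) ∈ S := hmem _ (Nat.sub_le n 1)
  have hfy : f (c (n - 1)) ∈ S ∩ Metric.ball x r := ⟨hinv hy, hchain.dist_apply_pred_lt⟩
  rw [hiso] at hfy
  exact ⟨c (n - 1), hy, hfy⟩
end

section
/- Let E be a complex Hilbert space and let w, v ∈ E be unit vectors such that the inner product ⟪v, w⟫ equals a real number c with 0 ≤ c < 1. Define the continuous linear operator K : E → E by K(u) = (arccos c / √(1 − c²)) · ( ⟪w, u⟫ · v − ⟪v, u⟫ · w ). Then: (i) K is skew-adjoint, i.e., K* = −K; (ii) the operator norm of K equals arccos c; (iii) exp(K) w = v, where exp is the exponential in the Banach algebra of continuous linear operators on E. -/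
/-!
Put `δ = arccos c`, `s = √(1 - c²)` and `u = s⁻¹ (v - c w)`, so that `(w, u)` is orthonormal and
`v = c w + s u`. Then `K = δ G`, where `G x = ⟪w, x⟫ u - ⟪u, x⟫ w` rotates the plane of `w, u` by a
right angle and kills its orthogonal complement. `G` is skew-adjoint, has norm one by Bessel's
inequality, and `G² w = -w`, so the exponential series of `K` applied to `w` splits into the cosine
and sine series: `exp K w = cos δ • w + sin δ • u = c w + s u = v`.
-/

open ContinuousLinearMap
open scoped InnerProductSpace Nat

section Exponential

variable {𝕜 E : Type*} [RCLike 𝕜] [NormedAddCommGroup E] [NormedSpace 𝕜 E]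

theorem pow_apply_of_apply_eq_smul_of_apply_eq_neg_smul {T : E →L[𝕜] E} {a b : E} {θ : 𝕜}
    (ha : T a = θ • b) (hb : T b = -(θ • a)) (k : ℕ) :
    (T ^ (2 * k)) a = (-θ ^ 2) ^ k • a ∧ (T ^ (2 * k + 1)) a = ((-θ ^ 2) ^ k * θ) • b := by
  induction k with
  | zero => simp [ha]
  | succ k ih =>
    have heven : (T ^ (2 * (k + 1))) a = (-θ ^ 2) ^ (k + 1) • a := by
      rw [show 2 * (k + 1) = 2 * k + 1 + 1 by ring, pow_succ', mul_apply_eq_comp, ih.2,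
        map_smul, hb, smul_neg, smul_smul, ← neg_smul]
      ring_nf
    refine ⟨heven, ?_⟩
    rw [pow_succ', mul_apply_eq_comp, heven, map_smul, ha, smul_smul]

theorem exp_apply_of_apply_eq_smul_of_apply_eq_neg_smul [CompleteSpace E] {T : E →L[𝕜] E}
    {a b : E} {θ : ℝ} (ha : T a = (θ : 𝕜) • b) (hb : T b = -((θ : 𝕜) • a)) :
    NormedSpace.exp T a = (Real.cos θ : 𝕜) • a + (Real.sin θ : 𝕜) • b := by
  have hpow := pow_apply_of_apply_eq_smul_of_apply_eq_neg_smul ha hb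
  have hexp : HasSum (fun n ↦ ((n ! : 𝕜)⁻¹) • (T ^ n) a) (NormedSpace.exp T a) := by
    simpa using (apply 𝕜 E a).hasSum (NormedSpace.exp_series_hasSum_exp' (𝕂 := 𝕜) T)
  have hcos : HasSum (fun k ↦ (((2 * k) ! : 𝕜)⁻¹) • (T ^ (2 * k)) a) ((Real.cos θ : 𝕜) • a) := by
    convert ((RCLike.hasSum_ofReal 𝕜).mpr (Real.hasSum_cos θ)).smul_const a using 2 with k
    rw [(hpow k).1, smul_smul]
    push_cast
    congr 1
    rw [neg_pow, ← pow_mul]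
    ring
  have hsin : HasSum (fun k ↦ (((2 * k + 1) ! : 𝕜)⁻¹) • (T ^ (2 * k + 1)) a)
      ((Real.sin θ : 𝕜) • b) := by
    convert ((RCLike.hasSum_ofReal 𝕜).mpr (Real.hasSum_sin θ)).smul_const b using 2 with k
    rw [(hpow k).2, smul_smul]
    push_cast
    congr 1
    rw [neg_pow, ← pow_mul]
    ring
  exact hexp.unique (HasSum.even_add_odd (f := fun n ↦ ((n ! : 𝕜)⁻¹) • (T ^ n) a) hcos hsin)

end Exponential

section RotationGenerator

variable (𝕜 : Type*) {E : Type*} [RCLike 𝕜] [NormedAddCommGroup E] [InnerProductSpace 𝕜 E]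

noncomputable def rotationGenerator (a b : E) : E →L[𝕜] E :=
  (innerSL 𝕜 a).smulRight b - (innerSL 𝕜 b).smulRight a

variable {𝕜}

@[simp]
theorem rotationGenerator_apply (a b x : E) :
    rotationGenerator 𝕜 a b x = ⟪a, x⟫_𝕜 • b - ⟪b, x⟫_𝕜 • a := by
  simp [rotationGenerator]

theorem adjoint_rotationGenerator [CompleteSpace E] (a b : E) :
    adjoint (rotationGenerator 𝕜 a b) = -rotationGenerator 𝕜 a b := by
  symm
  refine (eq_adjoint_iff _ _).mpr fun x y ↦ ?_
  simp only [neg_apply, rotationGenerator_apply, inner_neg_left, inner_sub_left, inner_sub_right,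
    inner_smul_left, inner_smul_right, inner_conj_symm]
  ring

theorem rotationGenerator_ofReal_smul_add_ofReal_smul (a b : E) (c s : ℝ) :
    rotationGenerator 𝕜 a ((c : 𝕜) • a + (s : 𝕜) • b) = (s : 𝕜) • rotationGenerator 𝕜 a b := by
  ext x
  simp only [rotationGenerator_apply, smul_apply, inner_add_left, inner_smul_left,
    RCLike.conj_ofReal, smul_sub, smul_add, add_smul, smul_smul, mul_comm]
  abel

theorem orthonormal_pair_iff {a b : E} :
    Orthonormal 𝕜 ![a, b] ↔ ‖a‖ = 1 ∧ ‖b‖ = 1 ∧ ⟪a, b⟫_𝕜 = 0 := by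
  simp only [orthonormal_vecCons_iff, Matrix.cons_val_fin_one, forall_const,
    orthonormal_subsingleton_iff]
  tauto

namespace Orthonormal

variable {a b : E} (hab : Orthonormal 𝕜 ![a, b])
include hab

theorem rotationGenerator_apply_left : rotationGenerator 𝕜 a b a = b := by
  obtain ⟨ha, -, hab'⟩ := orthonormal_pair_iff.mp hab
  simp [inner_self_eq_norm_sq_to_K, ha, inner_eq_zero_symm.mp hab']

theorem rotationGenerator_apply_right : rotationGenerator 𝕜 a b b = -a := by
  obtain ⟨-, hb, hab'⟩ := orthonormal_pair_iff.mp hab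
  simp [inner_self_eq_norm_sq_to_K, hb, hab']

theorem norm_rotationGenerator : ‖rotationGenerator 𝕜 a b‖ = 1 := by
  obtain ⟨ha, hb, hab'⟩ := orthonormal_pair_iff.mp hab
  refine le_antisymm (opNorm_le_bound _ zero_le_one fun x ↦ ?_) ?_
  · have hbessel := hab.sum_inner_products_le (s := Finset.univ) x
    simp only [Fin.sum_univ_two, Matrix.cons_val_zero, Matrix.cons_val_one] at hbessel
    have hpyth : ‖rotationGenerator 𝕜 a b x‖ ^ 2 = ‖⟪a, x⟫_𝕜‖ ^ 2 + ‖⟪b, x⟫_𝕜‖ ^ 2 := by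
      rw [rotationGenerator_apply, @norm_sub_sq 𝕜, inner_smul_left, inner_smul_right,
        inner_eq_zero_symm.mp hab']
      simp [norm_smul, ha, hb]
    nlinarith [norm_nonneg (rotationGenerator 𝕜 a b x), norm_nonneg x]
  · simpa [hab.rotationGenerator_apply_left, ha, hb] using
      (rotationGenerator 𝕜 a b).le_opNorm a

end Orthonormal

theorem exists_orthonormal_eq_smul_add_smul {w v : E} (hw : ‖w‖ = 1) (hv : ‖v‖ = 1) {c : ℝ}
    (hvw : ⟪v, w⟫_𝕜 = c) (hc : c ^ 2 < 1) :
    ∃ u, Orthonormal 𝕜 ![w, u] ∧ v = (c : 𝕜) • w + (√(1 - c ^ 2) : 𝕜) • u := by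
  set s := √(1 - c ^ 2)
  have hs : 0 < s := Real.sqrt_pos.mpr (by linarith)
  have hs0 : (s : 𝕜) ≠ 0 := RCLike.ofReal_ne_zero.mpr hs.ne'
  have hwv : ⟪w, v⟫_𝕜 = c := by rw [← inner_conj_symm, hvw, RCLike.conj_ofReal]
  have hnorm : ‖v - (c : 𝕜) • w‖ = s := by
    rw [← Real.sqrt_sq (norm_nonneg _), @norm_sub_sq 𝕜, inner_smul_right, hvw, norm_smul, hv, hw,
      RCLike.norm_ofReal, ← RCLike.ofReal_mul, RCLike.ofReal_re, mul_one, sq_abs, one_pow]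
    congr 1
    ring
  refine ⟨(s : 𝕜)⁻¹ • (v - (c : 𝕜) • w), orthonormal_pair_iff.mpr ⟨hw, ?_, ?_⟩,
    by rw [smul_inv_smul₀ hs0]; abel⟩
  · rw [norm_smul, hnorm, norm_inv, RCLike.norm_ofReal, abs_of_pos hs, inv_mul_cancel₀ hs.ne']
  · rw [inner_smul_right, inner_sub_right, inner_smul_right, hwv, inner_self_eq_norm_sq_to_K, hw]
    simp

end RotationGenerator

theorem rotation_generator_properties
    {E : Type*} [NormedAddCommGroup E] [InnerProductSpace ℂ E] [CompleteSpace E]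
    (w v : E) (hw : ‖w‖ = 1) (hv : ‖v‖ = 1)
    (c : ℝ) (hc0 : 0 ≤ c) (hc1 : c < 1)
    (hvw : (inner ℂ v w : ℂ) = (c : ℂ)) :
    let K : E →L[ℂ] E :=
      ((Real.arccos c / Real.sqrt (1 - c ^ 2) : ℝ) : ℂ) •
        ((innerSL ℂ w).smulRight v - (innerSL ℂ v).smulRight w)
    ContinuousLinearMap.adjoint K = -K ∧
      ‖K‖ = Real.arccos c ∧
      (NormedSpace.exp K) w = v := by
  intro K
  have hc : c ^ 2 < 1 := by nlinarith
  have hs : 0 < √(1 - c ^ 2) := Real.sqrt_pos.mpr (by linarith)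
  obtain ⟨u, hwu, hv_eq⟩ := exists_orthonormal_eq_smul_add_smul hw hv hvw hc
  have hK : K = (Real.arccos c : ℂ) • rotationGenerator ℂ w u := by
    change ((Real.arccos c / √(1 - c ^ 2) : ℝ) : ℂ) • rotationGenerator ℂ w v = _
    rw [hv_eq, rotationGenerator_ofReal_smul_add_ofReal_smul, smul_smul,
      RCLike.ofReal_eq_complex_ofReal, ← Complex.ofReal_mul,
      div_mul_cancel₀ _ hs.ne']
  refine ⟨?_, ?_, ?_⟩
  · rw [hK, map_smulₛₗ, adjoint_rotationGenerator, Complex.conj_ofReal, smul_neg]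
  · rw [hK, norm_smul, hwu.norm_rotationGenerator, Complex.norm_real,
      Real.norm_of_nonneg (Real.arccos_nonneg c), mul_one]
  · rw [hK, exp_apply_of_apply_eq_smul_of_apply_eq_neg_smul (θ := Real.arccos c)
        (by rw [smul_apply, hwu.rotationGenerator_apply_left]; rfl)
        (by rw [smul_apply, hwu.rotationGenerator_apply_right, smul_neg]; rfl),
      Real.cos_arccos (by linarith) hc1.le, Real.sin_arccos, hv_eq]
end

section
/- Let E be a complex inner product space and let u, v, w ∈ E be unit vectors. Then arccos |⟪u, w⟫| ≤ arccos |⟪u, v⟫| + arccos |⟪v, w⟫|. (Together with symmetry and arccos |⟪u,u⟫| = 0, this shows that d_FS(u,v) = arccos |⟪u,v⟫| is a pseudometric on unit vectors, descending to the Fubini–Study metric on the projective space of E.) -/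
/-!
Multiplying `u` and `w` by unit complex scalars does not change `|⟪u, w⟫|`, and can make `⟪u, v⟫`
and `⟪v, w⟫` real and nonnegative. For such representatives the Fubini–Study distances
`arccos |⟪u, v⟫|` and `arccos |⟪v, w⟫|` are the real angles `∠(u, v)` and `∠(v, w)` of `E` viewed as
a real inner product space (with inner product `re ⟪·, ·⟫`), while `arccos |⟪u, w⟫| ≤ ∠(u, w)` since
`re ⟪u, w⟫ ≤ |⟪u, w⟫|`. The triangle inequality for real angles then gives the claim.
-/

open Real InnerProductGeometry
open scoped InnerProductSpace

attribute [local instance] InnerProductSpace.complexToReal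

theorem Complex.exp_neg_arg_mul_I_mul_self (z : ℂ) :
    Complex.exp (-(z.arg * Complex.I)) * z = ‖z‖ := by
  nth_rw 2 [← Complex.norm_mul_exp_arg_mul_I z]
  rw [mul_left_comm, ← Complex.exp_add, neg_add_cancel, Complex.exp_zero, mul_one]

section

variable {E : Type*} [NormedAddCommGroup E] [InnerProductSpace ℂ E]

theorem exists_norm_eq_one_inner_smul_left_eq_norm (x y : E) :
    ∃ c : ℂ, ‖c‖ = 1 ∧ ⟪c • x, y⟫_ℂ = ‖⟪x, y⟫_ℂ‖ := by
  refine ⟨Complex.exp ((⟪x, y⟫_ℂ).arg * Complex.I), by simp, ?_⟩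
  rw [inner_smul_left, ← Complex.exp_conj]
  simp [Complex.exp_neg_arg_mul_I_mul_self]

theorem arccos_norm_inner_div_le_angle (x y : E) :
    arccos (‖⟪x, y⟫_ℂ‖ / (‖x‖ * ‖y‖)) ≤ angle x y := by
  unfold angle
  gcongr
  rw [real_inner_eq_re_inner ℂ]
  exact Complex.re_le_norm _

theorem exists_angle_smul_left_eq_arccos (x y : E) :
    ∃ c : ℂ, ‖c‖ = 1 ∧ angle (c • x) y = arccos (‖⟪x, y⟫_ℂ‖ / (‖x‖ * ‖y‖)) := by
  obtain ⟨c, hc, hxy⟩ := exists_norm_eq_one_inner_smul_left_eq_norm x y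
  refine ⟨c, hc, ?_⟩
  rw [angle, real_inner_eq_re_inner ℂ, hxy, norm_smul, hc, one_mul, RCLike.re_to_complex,
    Complex.ofReal_re]

end

theorem fubini_study_triangle
    {E : Type*} [NormedAddCommGroup E] [InnerProductSpace ℂ E]
    (u v w : E) (hu : ‖u‖ = 1) (hv : ‖v‖ = 1) (hw : ‖w‖ = 1) :
    Real.arccos (‖(inner ℂ u w : ℂ)‖) ≤
      Real.arccos (‖(inner ℂ u v : ℂ)‖) +
        Real.arccos (‖(inner ℂ v w : ℂ)‖) := by
  obtain ⟨c, hc, huv⟩ := exists_angle_smul_left_eq_arccos u v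
  obtain ⟨d, hd, hwv⟩ := exists_angle_smul_left_eq_arccos w v
  calc arccos ‖⟪u, w⟫_ℂ‖
      = arccos (‖⟪c • u, d • w⟫_ℂ‖ / (‖c • u‖ * ‖d • w‖)) := by
        simp [norm_smul, hc, hd, hu, hw]
    _ ≤ angle (c • u) (d • w) := arccos_norm_inner_div_le_angle _ _
    _ ≤ angle (c • u) v + angle v (d • w) := angle_le_angle_add_angle _ _ _
    _ = arccos ‖⟪u, v⟫_ℂ‖ + arccos ‖⟪v, w⟫_ℂ‖ := by
        rw [huv, angle_comm, hwv, norm_inner_symm w v, hu, hv, hw, one_mul, div_one, div_one]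
end
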